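/- Let S ⊆ {1, …, n} with |S| ≥ 2. Then F(S) ≠ ∅ if and only if there exists i ∈ S with F(S∖{i}) ≠ ∅ and v_i((C(S∖{i}), 1)) ≥ B; and in that case C(S) = min over all such i of the least point b ∈ [C(S∖{i}), 1] with v_i((C(S∖{i}), b)) ≥ B. For singletons, F({i}) ≠ ∅ if and only if v_i((0,1)) ≥ B, and in that case C({i}) is the least b ∈ [0,1] with v_i((0,b)) ≥ B. (Correctness of the recurrence used in the FPT-FPTAS for egalitarian welfare, Theorem 5.) -/

import Mathlib

/-!
An allocation of `[0, a]` is read as a list of players from left to right. Removing the last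
player `i` shows `a ∈ F(S)` iff some `x ∈ F(S ∖ {i})` has `x ≤ a` and `v_i((x, a)) ≥ B`; as
`v_i((x, a))` only grows when `x` decreases, `x` may be replaced by `C(S ∖ {i})` as soon as this
infimum is attained. It is, because every `F(S)` is closed: inductively, `F(S)` is the finite
union over `i` of the sets `{b ∈ [C(S ∖ {i}), 1] | v_i((C(S ∖ {i}), b)) ≥ B}`, which are closed
since `b ↦ v_i((c, b))` is right-continuous for a finite atomless measure.
-/

open MeasureTheory Set

/-- `Feas n v B S` is the set `F(S)`: points `a ∈ [0,1]` such that `[0,a]` can be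
partitioned into `S.card` consecutive intervals assigned bijectively to the
players of `S`, each player valuing her own interval at least `B`. -/
def Feas (n : ℕ) (v : Fin n → Measure ℝ) (B : ℝ) (S : Finset (Fin n)) : Set ℝ :=
  {a | a ∈ Icc (0 : ℝ) 1 ∧
    ∃ (c : Fin (S.card + 1) → ℝ) (σ : Fin S.card ≃ {i // i ∈ S}),
      Monotone c ∧ c 0 = 0 ∧ c (Fin.last S.card) = a ∧
      ∀ b : Fin S.card,
        ENNReal.ofReal B ≤ v (σ b) (Ioo (c b.castSucc) (c b.succ))}

open Filter Topology
open scoped ENNReal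

section Allocates

variable {ι : Type*} (v : ι → Measure ℝ) (r : ℝ≥0∞)

def Allocates : ℝ → List ι → ℝ → Prop
  | a, [], b => a = b
  | a, i :: l, b => ∃ x, a ≤ x ∧ r ≤ v i (Ioo a x) ∧ Allocates x l b

variable {v r}

theorem Allocates.le {a b : ℝ} {l : List ι} (h : Allocates v r a l b) : a ≤ b := by
  induction l generalizing a with
  | nil => exact le_of_eq h
  | cons i l ih =>
    obtain ⟨x, hax, -, hx⟩ := h
    exact hax.trans (ih hx)

theorem allocates_append {a b : ℝ} (l₁ l₂ : List ι) :
    Allocates v r a (l₁ ++ l₂) b ↔ ∃ x, Allocates v r a l₁ x ∧ Allocates v r x l₂ b := by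
  induction l₁ generalizing a with
  | nil => simp [Allocates]
  | cons i l ih =>
    simp only [List.cons_append, Allocates, ih]
    constructor
    · rintro ⟨x, hax, hx, y, hxy, hy⟩
      exact ⟨y, ⟨x, hax, hx, hxy⟩, hy⟩
    · rintro ⟨y, ⟨x, hax, hx, hxy⟩, hy⟩
      exact ⟨x, hax, hx, y, hxy, hy⟩

theorem allocates_singleton {a b : ℝ} {i : ι} :
    Allocates v r a [i] b ↔ a ≤ b ∧ r ≤ v i (Ioo a b) := by
  simp [Allocates]

theorem Fin.monotone_cons_iff {α : Type*} [Preorder α] {m : ℕ} {a : α} {f : Fin m → α} :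
    Monotone (Fin.cons a f : Fin (m + 1) → α) ↔ (∀ i, a ≤ f i) ∧ Monotone f := by
  simp only [monotone_iff_forall_lt]
  exact Fin.liftFun_cons (· ≤ ·)

theorem allocates_ofFn_iff {m : ℕ} (f : Fin m → ι) {a b : ℝ} :
    Allocates v r a (List.ofFn f) b ↔ ∃ c : Fin (m + 1) → ℝ, Monotone c ∧ c 0 = a ∧
      c (Fin.last m) = b ∧ ∀ j, r ≤ v (f j) (Ioo (c j.castSucc) (c j.succ)) := by
  induction m generalizing a with
  | zero =>
    simp only [List.ofFn_zero, Allocates, IsEmpty.forall_iff, and_true]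
    constructor
    · rintro rfl
      exact ⟨fun _ => a, monotone_const, rfl, rfl⟩
    · rintro ⟨c, -, rfl, rfl⟩
      rfl
  | succ m ih =>
    rw [List.ofFn_succ, Allocates, Fin.exists_fin_succ_pi]
    simp only [ih]
    constructor
    · rintro ⟨x, hax, hx, c, hc, rfl, rfl, hcv⟩
      refine ⟨a, c, Fin.monotone_cons_iff.2 ⟨fun i => hax.trans (hc (Fin.zero_le i)), hc⟩, rfl,
        by simp [← Fin.succ_last], Fin.forall_fin_succ.2 ⟨by simpa using hx, fun j => ?_⟩⟩
      simpa [← Fin.succ_castSucc] using hcv j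
    · rintro ⟨a', c, hmono, rfl, rfl, hcv⟩
      obtain ⟨ha, hc⟩ := Fin.monotone_cons_iff.1 hmono
      rw [Fin.forall_fin_succ] at hcv
      refine ⟨c 0, ha 0, by simpa using hcv.1, c, hc, rfl, by simp [← Fin.succ_last], fun j => ?_⟩
      simpa [← Fin.succ_castSucc] using hcv.2 j

end Allocates

theorem Finset.exists_fin_equiv_iff_ofFn_eq_val {α : Type*} (S : Finset α) (f : Fin S.card → α) :
    (∃ σ : Fin S.card ≃ S, ∀ j, (σ j : α) = f j) ↔ (List.ofFn f : Multiset α) = S.val := by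
  constructor
  · rintro ⟨σ, hσ⟩
    obtain rfl : (fun j => (σ j : α)) = f := funext hσ
    have hnodup := List.nodup_ofFn.2 (Subtype.val_injective.comp σ.injective)
    refine (Multiset.Nodup.ext (Multiset.coe_nodup.2 hnodup) S.nodup).2 fun x => ?_
    simp only [Multiset.mem_coe, List.mem_ofFn, Finset.mem_val]
    exact ⟨fun ⟨j, hj⟩ => hj ▸ (σ j).2, fun hx => ⟨σ.symm ⟨x, hx⟩, by simp⟩⟩
  · intro h
    have hmem : ∀ j, f j ∈ S := fun j => by simp [← Finset.mem_val, ← h]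
    have hinj : Function.Injective fun j => (⟨f j, hmem j⟩ : S) := fun j k hjk =>
      List.nodup_ofFn.1 (Multiset.coe_nodup.1 (h ▸ S.nodup)) (congrArg Subtype.val hjk)
    exact ⟨.ofBijective _ ((Fintype.bijective_iff_injective_and_card _).2 ⟨hinj, by simp⟩),
      fun _ => rfl⟩

section Threshold

variable {μ : Measure ℝ} {r : ℝ≥0∞}

def threshold (μ : Measure ℝ) (r : ℝ≥0∞) (a : ℝ) : Set ℝ :=
  {b | b ∈ Icc a 1 ∧ r ≤ μ (Ioo a b)}

theorem threshold_nonempty_iff {a : ℝ} :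
    (threshold μ r a).Nonempty ↔ a ≤ 1 ∧ r ≤ μ (Ioo a 1) :=
  ⟨fun ⟨_, ⟨hab, hb1⟩, h⟩ => ⟨hab.trans hb1, h.trans (measure_mono (Ioo_subset_Ioo_right hb1))⟩,
    fun ⟨ha, h⟩ => ⟨1, ⟨ha, le_rfl⟩, h⟩⟩

theorem exists_mem_le_measure_Ioo_iff {F : Set ℝ} {C b : ℝ} (hC : IsLeast F C) :
    (∃ x ∈ F, x ≤ b ∧ r ≤ μ (Ioo x b)) ↔ C ≤ b ∧ r ≤ μ (Ioo C b) :=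
  ⟨fun ⟨_, hx, hxb, h⟩ =>
    ⟨(hC.2 hx).trans hxb, h.trans (measure_mono (Ioo_subset_Ioo_left (hC.2 hx)))⟩,
    fun ⟨hCb, h⟩ => ⟨C, hC.1, hCb, h⟩⟩

theorem Set.biInter_gt_Ioo {α : Type*} [LinearOrder α] [NoMaxOrder α] (a b : α) :
    ⋂ y > b, Ioo a y = Ioc a b := by
  ext x
  simp only [mem_iInter, mem_Ioo, mem_Ioc]
  obtain ⟨c, hc⟩ := exists_gt b
  exact ⟨fun h => ⟨(h c hc).1, le_of_forall_gt fun y hy => (h y hy).2⟩,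
    fun ⟨hax, hxb⟩ y hy => ⟨hax, hxb.trans_lt hy⟩⟩

theorem isClosed_setOf_le_measure_Ioo [IsFiniteMeasure μ] [NullSingletonClass μ] (a : ℝ) :
    IsClosed {b | r ≤ μ (Ioo a b)} := by
  refine isOpen_compl_iff.1 (isOpen_iff_mem_nhds.2 fun b hb => ?_)
  replace hb : μ (Ioo a b) < r := not_le.1 hb
  have hlim : Tendsto (fun y => μ (Ioo a y)) (𝓝[>] b) (𝓝 (μ (Ioo a b))) := by
    have := tendsto_measure_biInter_gt (μ := μ) (s := fun y => Ioo a y) (a := b)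
      (fun _ _ => measurableSet_Ioo.nullMeasurableSet) (fun _ _ _ hij => Ioo_subset_Ioo_right hij)
      ⟨b + 1, by linarith, measure_ne_top _ _⟩
    rwa [biInter_gt_Ioo, ← measure_congr Ioo_ae_eq_Ioc] at this
  obtain ⟨y, hy, hby⟩ := ((hlim.eventually (gt_mem_nhds hb)).and self_mem_nhdsWithin).exists
  filter_upwards [Iio_mem_nhds hby] with z hz
  exact not_le.2 ((measure_mono (Ioo_subset_Ioo_right (le_of_lt hz))).trans_lt hy)

theorem isClosed_threshold [IsFiniteMeasure μ] [NullSingletonClass μ] (a : ℝ) :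
    IsClosed (threshold μ r a) :=
  isClosed_Icc.inter (isClosed_setOf_le_measure_Ioo a)

end Threshold

theorem IsLeast.isLeast_setOf_isLeast {α ι : Type*} [Preorder α] {s : Set α} {t : ι → Set α}
    {p : ι → Prop} {m : α} (hm : IsLeast s m) (hs : ∀ b, b ∈ s ↔ ∃ i, p i ∧ b ∈ t i) :
    IsLeast {b | ∃ i, p i ∧ IsLeast (t i) b} m := by
  obtain ⟨i, hi, hmi⟩ := (hs m).1 hm.1
  exact ⟨⟨i, hi, hmi, fun b hb => hm.2 ((hs b).2 ⟨i, hi, hb⟩)⟩,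
    fun b ⟨j, hj, hb⟩ => hm.2 ((hs b).2 ⟨j, hj, hb.1⟩)⟩

section Feas

variable {n : ℕ} (v : Fin n → Measure ℝ) (B : ℝ)

theorem mem_feas_iff {S : Finset (Fin n)} {b : ℝ} :
    b ∈ Feas n v B S ↔ b ∈ Icc 0 1 ∧
      ∃ l : List (Fin n), (l : Multiset (Fin n)) = S.val ∧ Allocates v (.ofReal B) 0 l b := by
  constructor
  · rintro ⟨hb, c, σ, hc, h0, hlast, hv⟩
    exact ⟨hb, List.ofFn fun j => σ j, (S.exists_fin_equiv_iff_ofFn_eq_val _).1 ⟨σ, fun _ => rfl⟩,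
      (allocates_ofFn_iff _).2 ⟨c, hc, h0, hlast, hv⟩⟩
  · rintro ⟨hb, l, hl, hA⟩
    have hlen : l.length = S.card := by rw [← Multiset.coe_card, hl, Finset.card_val]
    obtain ⟨f, rfl⟩ : ∃ f : Fin S.card → Fin n, List.ofFn f = l := by
      rw [← hlen]
      exact ⟨l.get, List.ofFn_get l⟩
    obtain ⟨σ, hσ⟩ := (S.exists_fin_equiv_iff_ofFn_eq_val f).2 hl
    obtain ⟨c, hc, h0, hlast, hv⟩ := (allocates_ofFn_iff f).1 hA
    exact ⟨hb, c, σ, hc, h0, hlast, fun j => hσ j ▸ hv j⟩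

theorem feas_empty : Feas n v B ∅ = {0} := by
  ext b
  simp +contextual [mem_feas_iff, Allocates, eq_comm]

theorem mem_feas_iff_exists_erase {S : Finset (Fin n)} (hS : S.Nonempty) {b : ℝ} :
    b ∈ Feas n v B S ↔ b ≤ 1 ∧ ∃ i ∈ S, ∃ x ∈ Feas n v B (S.erase i),
      x ≤ b ∧ ENNReal.ofReal B ≤ v i (Ioo x b) := by
  have hcons (L : List (Fin n)) (i : Fin n) :
      ((L ++ [i] : List (Fin n)) : Multiset (Fin n)) = i ::ₘ L :=
    Multiset.coe_eq_coe.2 (List.perm_append_singleton i L)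
  simp only [mem_feas_iff]
  constructor
  · rintro ⟨hb, l, hl, hA⟩
    obtain rfl | ⟨L, i, rfl⟩ := l.eq_nil_or_concat'
    · simp [eq_comm, Finset.val_eq_zero, hS.ne_empty] at hl
    have hi : i ∈ S := by simp [← Finset.mem_val, ← hl, hcons]
    obtain ⟨x, hL, hx⟩ := (allocates_append _ _).1 hA
    obtain ⟨hxb, hv⟩ := allocates_singleton.1 hx
    refine ⟨hb.2, i, hi, x, ⟨⟨hL.le, hxb.trans hb.2⟩, L, ?_, hL⟩, hxb, hv⟩
    rw [Finset.erase_val, ← hl, hcons, Multiset.erase_cons_head]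
  · rintro ⟨hb, i, hi, x, ⟨hx, L, hL, hA⟩, hxb, hv⟩
    refine ⟨⟨hx.1.trans hxb, hb⟩, L ++ [i], ?_,
      (allocates_append _ _).2 ⟨x, hA, allocates_singleton.2 ⟨hxb, hv⟩⟩⟩
    rw [hcons, hL, Finset.erase_val, Multiset.cons_erase (Finset.mem_val.mpr hi)]

theorem isLeast_sInf_feas {S : Finset (Fin n)} (hcl : IsClosed (Feas n v B S))
    (hne : (Feas n v B S).Nonempty) : IsLeast (Feas n v B S) (sInf (Feas n v B S)) :=
  hcl.isLeast_csInf hne ⟨0, fun _ hb => hb.1.1⟩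

theorem mem_feas_iff_mem_threshold {S : Finset (Fin n)} (hS : S.Nonempty)
    (hcl : ∀ i ∈ S, IsClosed (Feas n v B (S.erase i))) {b : ℝ} :
    b ∈ Feas n v B S ↔ ∃ i ∈ S, (Feas n v B (S.erase i)).Nonempty ∧
      b ∈ threshold (v i) (.ofReal B) (sInf (Feas n v B (S.erase i))) := by
  rw [mem_feas_iff_exists_erase v B hS]
  constructor
  · rintro ⟨hb, i, hi, x, hx, hxb, hv⟩
    have hC := isLeast_sInf_feas v B (hcl i hi) ⟨x, hx⟩
    obtain ⟨hCb, hCv⟩ := (exists_mem_le_measure_Ioo_iff hC).1 ⟨x, hx, hxb, hv⟩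
    exact ⟨i, hi, ⟨x, hx⟩, ⟨hCb, hb⟩, hCv⟩
  · rintro ⟨i, hi, hne, ⟨hCb, hb⟩, hCv⟩
    exact ⟨hb, i, hi, (exists_mem_le_measure_Ioo_iff (isLeast_sInf_feas v B (hcl i hi) hne)).2
      ⟨hCb, hCv⟩⟩

variable [∀ i, IsFiniteMeasure (v i)] [∀ i, NullSingletonClass (v i)]

theorem isClosed_feas (S : Finset (Fin n)) : IsClosed (Feas n v B S) := by
  classical
  induction S using Finset.strongInduction with
  | H S ih =>
    rcases S.eq_empty_or_nonempty with rfl | hS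
    · rw [feas_empty]
      exact isClosed_singleton
    have hcl i (hi : i ∈ S) := ih _ (Finset.erase_ssubset hi)
    have : Feas n v B S = ⋃ i ∈ S.filter (fun i => (Feas n v B (S.erase i)).Nonempty),
        threshold (v i) (.ofReal B) (sInf (Feas n v B (S.erase i))) := by
      ext b
      simp [mem_feas_iff_mem_threshold v B hS hcl, and_assoc]
    rw [this]
    exact isClosed_biUnion_finset fun i _ => isClosed_threshold _

theorem feas_nonempty_iff {S : Finset (Fin n)} (hS : S.Nonempty) :
    (Feas n v B S).Nonempty ↔ ∃ i ∈ S, (Feas n v B (S.erase i)).Nonempty ∧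
      ENNReal.ofReal B ≤ v i (Ioo (sInf (Feas n v B (S.erase i))) 1) := by
  have hcl i (_ : i ∈ S) := isClosed_feas v B (S.erase i)
  constructor
  · rintro ⟨b, hb⟩
    obtain ⟨i, hi, hne, hb⟩ := (mem_feas_iff_mem_threshold v B hS hcl).1 hb
    exact ⟨i, hi, hne, (threshold_nonempty_iff.1 ⟨b, hb⟩).2⟩
  · rintro ⟨i, hi, hne, hv⟩
    have hC1 := (isLeast_sInf_feas v B (hcl i hi) hne).1.1.2
    obtain ⟨b, hb⟩ := threshold_nonempty_iff.2 ⟨hC1, hv⟩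
    exact ⟨b, (mem_feas_iff_mem_threshold v B hS hcl).2 ⟨i, hi, hne, hb⟩⟩

theorem isLeast_minima_sInf_feas {S : Finset (Fin n)} (hS : S.Nonempty)
    (hne : (Feas n v B S).Nonempty) :
    IsLeast {b : ℝ | ∃ i ∈ S, (Feas n v B (S.erase i)).Nonempty ∧
            ENNReal.ofReal B ≤ v i (Ioo (sInf (Feas n v B (S.erase i))) 1) ∧
            IsLeast (threshold (v i) (.ofReal B) (sInf (Feas n v B (S.erase i)))) b}
          (sInf (Feas n v B S)) := by
  have hcl i (_ : i ∈ S) := isClosed_feas v B (S.erase i)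
  have := (isLeast_sInf_feas v B (isClosed_feas v B S) hne).isLeast_setOf_isLeast
    (p := fun i => i ∈ S ∧ (Feas n v B (S.erase i)).Nonempty ∧
      ENNReal.ofReal B ≤ v i (Ioo (sInf (Feas n v B (S.erase i))) 1))
    (t := fun i => threshold (v i) (.ofReal B) (sInf (Feas n v B (S.erase i)))) fun b => by
      rw [mem_feas_iff_mem_threshold v B hS hcl]
      exact ⟨fun ⟨i, hi, hne, hb⟩ => ⟨i, ⟨hi, hne, (threshold_nonempty_iff.1 ⟨b, hb⟩).2⟩, hb⟩,
        fun ⟨i, ⟨hi, hne, _⟩, hb⟩ => ⟨i, hi, hne, hb⟩⟩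
  simpa only [and_assoc] using this

theorem feas_singleton (i : Fin n) : Feas n v B {i} = threshold (v i) (.ofReal B) 0 := by
  ext b
  rw [mem_feas_iff_mem_threshold v B (Finset.singleton_nonempty i) fun _ _ => isClosed_feas v B _]
  simp [feas_empty]

end Feas

theorem stmt_7_general (n : ℕ) (v : Fin n → Measure ℝ)
    (hatomless : ∀ i, NoAtoms (v i))
    (hprob : ∀ i, v i (Icc 0 1) = 1) (hsupp : ∀ i, v i (Icc (0 : ℝ) 1)ᶜ = 0)
    (B : ℝ) :
    (∀ S : Finset (Fin n), 2 ≤ S.card →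
      ((Feas n v B S).Nonempty ↔
        ∃ i ∈ S, (Feas n v B (S.erase i)).Nonempty ∧
          ENNReal.ofReal B ≤ v i (Ioo (sInf (Feas n v B (S.erase i))) 1)) ∧
      ((Feas n v B S).Nonempty →
        IsLeast {b : ℝ | ∃ i ∈ S, (Feas n v B (S.erase i)).Nonempty ∧
            ENNReal.ofReal B ≤ v i (Ioo (sInf (Feas n v B (S.erase i))) 1) ∧
            IsLeast {b' : ℝ | b' ∈ Icc (sInf (Feas n v B (S.erase i))) 1 ∧
                ENNReal.ofReal B ≤ v i (Ioo (sInf (Feas n v B (S.erase i))) b')} b}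
          (sInf (Feas n v B S)))) ∧
    (∀ i : Fin n,
      ((Feas n v B {i}).Nonempty ↔ ENNReal.ofReal B ≤ v i (Ioo (0 : ℝ) 1)) ∧
      ((Feas n v B {i}).Nonempty →
        IsLeast {b : ℝ | b ∈ Icc (0 : ℝ) 1 ∧ ENNReal.ofReal B ≤ v i (Ioo (0 : ℝ) b)}
          (sInf (Feas n v B {i})))) := by
  have : ∀ i, NullSingletonClass (v i) := hatomless
  have : ∀ i, IsFiniteMeasure (v i) := fun i =>
    ⟨by rw [← measure_add_measure_compl (measurableSet_Icc (a := 0) (b := 1)), hprob, hsupp]; simp⟩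
  refine ⟨fun S hcard => ?_, fun i => ?_⟩
  · have hS : S.Nonempty := Finset.card_pos.1 (by omega)
    exact ⟨feas_nonempty_iff v B hS, isLeast_minima_sInf_feas v B hS⟩
  · rw [feas_singleton]
    exact ⟨threshold_nonempty_iff.trans (and_iff_right zero_le_one),
      fun h => (isClosed_threshold 0).isLeast_csInf h ⟨0, fun _ hb => hb.1.1⟩⟩

/-- correctness of the recurrence for `F(S)` and `C(S) = inf F(S)`
used in the FPT-FPTAS for egalitarian welfare (Theorem 5).  For `|S| ≥ 2`,
`F(S) ≠ ∅` iff some `i ∈ S` has `F(S∖{i}) ≠ ∅` and `v_i((C(S∖{i}),1)) ≥ B`,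
in which case `C(S)` is the minimum, over all such `i`, of the least point
`b ∈ [C(S∖{i}),1]` with `v_i((C(S∖{i}),b)) ≥ B`; and the analogous
characterization holds for singletons. -/
theorem stmt_7 (n : ℕ) (v : Fin n → Measure ℝ)
    (hatomless : ∀ i, NoAtoms (v i))
    (hprob : ∀ i, v i (Icc 0 1) = 1) (hsupp : ∀ i, v i (Icc (0 : ℝ) 1)ᶜ = 0)
    (B : ℝ) (hB0 : 0 < B) (hB1 : B ≤ 1) :
    (∀ S : Finset (Fin n), 2 ≤ S.card →
      ((Feas n v B S).Nonempty ↔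
        ∃ i ∈ S, (Feas n v B (S.erase i)).Nonempty ∧
          ENNReal.ofReal B ≤ v i (Ioo (sInf (Feas n v B (S.erase i))) 1)) ∧
      ((Feas n v B S).Nonempty →
        IsLeast {b : ℝ | ∃ i ∈ S, (Feas n v B (S.erase i)).Nonempty ∧
            ENNReal.ofReal B ≤ v i (Ioo (sInf (Feas n v B (S.erase i))) 1) ∧
            IsLeast {b' : ℝ | b' ∈ Icc (sInf (Feas n v B (S.erase i))) 1 ∧
                ENNReal.ofReal B ≤ v i (Ioo (sInf (Feas n v B (S.erase i))) b')} b}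
          (sInf (Feas n v B S)))) ∧
    (∀ i : Fin n,
      ((Feas n v B {i}).Nonempty ↔ ENNReal.ofReal B ≤ v i (Ioo (0 : ℝ) 1)) ∧
      ((Feas n v B {i}).Nonempty →
        IsLeast {b : ℝ | b ∈ Icc (0 : ℝ) 1 ∧ ENNReal.ofReal B ≤ v i (Ioo (0 : ℝ) b)}
          (sInf (Feas n v B {i})))) :=
  stmt_7_general n v hatomless hprob hsupp B
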